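/- Under the map ψ from Łukasiewicz paths to Motzkin paths, the positions of flat steps at height 0 in L coincide with the positions of flat steps at height 0 in ψ(L), and the number of up steps (of any size k ≥ 1) in L equals the number of up steps U in ψ(L). -/

import Mathlib

/-- A Łukasiewicz path: vertical step components, each `≥ -1`, all partial sums
nonnegative, total sum `0`. -/
def IsLukas (w : List ℤ) : Prop :=
  (∀ s ∈ w, -1 ≤ s) ∧ (∀ k, 0 ≤ (w.take k).sum) ∧ w.sum = 0

/-- `ψ` satisfies the defining recursive equations: `ψ(ε) = ε`,
`ψ(F L) = F ψ(L)`, and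
`ψ(U_k L₁ D L₂ D … L_k D L) = U ψ(L₁) F ψ(L₂) F … ψ(L_k) D ψ(L)`. -/
def PsiEquations (ψ : List ℤ → List ℤ) : Prop :=
  ψ [] = [] ∧
  (∀ L : List ℤ, IsLukas L → ψ (0 :: L) = 0 :: ψ L) ∧
  (∀ (Ls : List (List ℤ)) (L : List ℤ), Ls ≠ [] →
    (∀ M ∈ Ls, IsLukas M) → IsLukas L →
    ψ ((Ls.length : ℤ) :: ((Ls.map fun M => M ++ [(-1 : ℤ)]).flatten ++ L)) =
      1 :: ((List.intersperse [(0 : ℤ)] (Ls.map ψ)).flatten ++ (-1 : ℤ) :: ψ L))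

/-!
Every Łukasiewicz path is `ε`, `F L` or `U_k L₁ D … L_k D L` (after `U_k`, cut at the first
visits of the heights `k - 1, …, 0`), so `ψ` can be analysed by strong induction on the length.
Along the way `ψ L` stays an excursion of the same length as `L`. In the up case both
`U_k L₁ D … L_k D` and its image `U ψL₁ F … ψL_k D` are then blocks of the same length that
return to height `0` only at their end, so neither contains a flat step at height `0` and the
flats at height `0` of both paths are those of `L` and `ψ L`, shifted by the same amount.
Each block contains exactly one up step (`U_k`, resp. `U`) apart from those of the `Lᵢ`, resp.
`ψ Lᵢ`.
-/

def IsExcursion (w : List ℤ) : Prop :=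
  (∀ k, 0 ≤ (w.take k).sum) ∧ w.sum = 0

def GroundFlat (w : List ℤ) (j : ℕ) : Prop :=
  w[j]? = some 0 ∧ (w.take j).sum = 0

theorem List.sum_take_append {α : Type*} [AddMonoid α] (u v : List α) (j : ℕ) :
    ((u ++ v).take j).sum = (u.take j).sum + (v.take (j - u.length)).sum := by
  rw [List.take_append, List.sum_append]

theorem List.length_intercalate_add {α : Type*} (sep : List α) {l : List (List α)}
    (hl : l ≠ []) :
    (sep.intercalate l).length + sep.length = (l.map fun M => M.length + sep.length).sum := by
  induction l with
  | nil => contradiction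
  | cons x t ih =>
    cases t with
    | nil => simp
    | cons y t =>
      have ht := ih (List.cons_ne_nil y t)
      rw [List.intercalate_cons_cons]
      simp only [List.length_append, List.map_cons, List.sum_cons] at ht ⊢
      omega

theorem List.count_intercalate {α : Type*} [BEq α] [LawfulBEq α] {a : α} {sep : List α}
    (ha : a ∉ sep) (l : List (List α)) :
    (sep.intercalate l).count a = (l.map (List.count a)).sum := by
  induction l with
  | nil => simp
  | cons x t ih =>
    cases t with
    | nil => simp
    | cons y t =>
      rw [List.intercalate_cons_cons]
      simp only [List.count_append, List.map_cons, List.sum_cons, List.count_eq_zero.2 ha]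
        at ih ⊢
      omega

theorem isExcursion_nil : IsExcursion [] := ⟨fun _ => by simp, rfl⟩

theorem isExcursion_zero : IsExcursion [0] := ⟨fun j => by cases j <;> simp, rfl⟩

theorem IsExcursion.append {u v : List ℤ} (hu : IsExcursion u) (hv : IsExcursion v) :
    IsExcursion (u ++ v) :=
  ⟨fun j => by rw [List.sum_take_append]; exact add_nonneg (hu.1 j) (hv.1 _),
    by simp [hu.2, hv.2]⟩

theorem IsExcursion.intercalate {sep : List ℤ} (hsep : IsExcursion sep) {l : List (List ℤ)}
    (hl : ∀ M ∈ l, IsExcursion M) : IsExcursion (sep.intercalate l) := by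
  induction l with
  | nil => exact isExcursion_nil
  | cons x t ih =>
    have ht := ih fun M hM => hl M (List.mem_cons_of_mem x hM)
    cases t with
    | nil => simpa using hl x List.mem_cons_self
    | cons y t =>
      rw [List.intercalate_cons_cons]
      exact ((hl x List.mem_cons_self).append hsep).append ht

theorem IsExcursion.sum_take_append_neg_one_nonneg {B : List ℤ} (hB : IsExcursion B) {j : ℕ}
    (hj : j ≤ B.length) : 0 ≤ ((B ++ [-1]).take j).sum := by
  simpa [List.sum_take_append, Nat.sub_eq_zero_of_le hj] using hB.1 j

theorem IsExcursion.one_cons_append_neg_one {B : List ℤ} (hB : IsExcursion B) :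
    IsExcursion (1 :: (B ++ [-1])) := by
  refine ⟨fun j => ?_, by simp [hB.2]⟩
  cases j with
  | zero => simp
  | succ j =>
    rw [List.take_succ_cons, List.sum_cons]
    rcases le_or_gt j B.length with hj | hj
    · linarith [hB.sum_take_append_neg_one_nonneg hj]
    · rw [List.take_of_length_le (by simp; omega)]
      simp [hB.2]

theorem groundFlat_append_iff {u v : List ℤ} (hu : u.sum = 0) (hu' : ∀ j, ¬GroundFlat u j)
    (j : ℕ) : GroundFlat (u ++ v) j ↔ u.length ≤ j ∧ GroundFlat v (j - u.length) := by
  rcases lt_or_ge j u.length with hj | hj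
  · have : GroundFlat (u ++ v) j ↔ GroundFlat u j := by
      simp only [GroundFlat, List.getElem?_append_left hj, List.take_append_of_le_length hj.le]
    simp only [this, hu' j, false_iff, not_and]
    omega
  · simp only [GroundFlat, List.getElem?_append_right hj, List.sum_take_append,
      List.take_of_length_le hj, hu, zero_add, hj, true_and]

theorem not_groundFlat_cons {a : ℤ} {t : List ℤ} (ha : a ≠ 0)
    (ht : ∀ j < t.length, 0 < a + (t.take j).sum) (j : ℕ) : ¬GroundFlat (a :: t) j := by
  rintro ⟨hget, hsum⟩
  cases j with
  | zero => simp [ha] at hget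
  | succ j =>
    rw [List.getElem?_cons_succ] at hget
    have := ht j (List.getElem?_eq_some_iff.1 hget).1
    rw [List.take_succ_cons, List.sum_cons] at hsum
    omega

theorem List.length_flatten_map_append_singleton {α : Type*} (a : α) (Ls : List (List α)) :
    (Ls.map (· ++ [a])).flatten.length = (Ls.map fun M => M.length + 1).sum := by
  simp [List.length_flatten, Function.comp_def]

theorem sum_flatten_map_append_neg_one {Ls : List (List ℤ)} (h : ∀ M ∈ Ls, M.sum = 0) :
    (Ls.map (· ++ [-1])).flatten.sum = -Ls.length := by
  induction Ls with
  | nil => simp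
  | cons x t ih =>
    simp only [List.map_cons, List.flatten_cons, List.sum_append, List.length_cons,
      h x List.mem_cons_self, ih fun M hM => h M (List.mem_cons_of_mem x hM)]
    simp

theorem neg_length_lt_sum_take_flatten_map_append_neg_one {Ls : List (List ℤ)}
    (h : ∀ M ∈ Ls, IsExcursion M) {j : ℕ} (hj : j < (Ls.map (· ++ [-1])).flatten.length) :
    -(Ls.length : ℤ) < ((Ls.map (· ++ [-1])).flatten.take j).sum := by
  induction Ls generalizing j with
  | nil => simp at hj
  | cons x t ih =>
    have hx := h x List.mem_cons_self
    simp only [List.map_cons, List.flatten_cons, List.append_assoc, List.singleton_append,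
      List.length_cons, List.sum_take_append] at hj ⊢
    rcases le_or_gt j x.length with hjx | hjx
    · rw [Nat.sub_eq_zero_of_le hjx]
      simp
      linarith [hx.1 j]
    · obtain ⟨i, hi⟩ : ∃ i, j - x.length = i + 1 := ⟨j - x.length - 1, by omega⟩
      have := ih (fun M hM => h M (List.mem_cons_of_mem x hM)) (j := i)
        (by simp only [List.length_append, List.length_cons] at hj; omega)
      rw [hi, List.take_succ_cons, List.sum_cons]
      push_cast
      linarith [hx.1 j]

theorem List.countP_flatten_map_append_singleton {α : Type*} {p : α → Bool} {a : α}
    (ha : ¬p a) (Ls : List (List α)) :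
    (Ls.map (· ++ [a])).flatten.countP p = (Ls.map (List.countP p)).sum := by
  simp [List.countP_flatten, Function.comp_def, ha]

theorem sum_length_cons_flatten_map_append_neg_one {Ls : List (List ℤ)}
    (h : ∀ M ∈ Ls, IsExcursion M) :
    ((Ls.length : ℤ) :: (Ls.map (· ++ [-1])).flatten).sum = 0 := by
  simp [sum_flatten_map_append_neg_one fun M hM => (h M hM).2]

theorem not_groundFlat_length_cons_flatten_map_append_neg_one {Ls : List (List ℤ)}
    (hne : Ls ≠ []) (h : ∀ M ∈ Ls, IsExcursion M) (j : ℕ) :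
    ¬GroundFlat ((Ls.length : ℤ) :: (Ls.map (· ++ [-1])).flatten) j :=
  not_groundFlat_cons (by simpa using hne) (fun j hj => by
    linarith [neg_length_lt_sum_take_flatten_map_append_neg_one h hj]) j

theorem IsExcursion.not_groundFlat_one_cons_append_neg_one {B : List ℤ} (hB : IsExcursion B)
    (j : ℕ) : ¬GroundFlat (1 :: (B ++ [-1])) j :=
  not_groundFlat_cons one_ne_zero (fun j hj => by
    linarith [hB.sum_take_append_neg_one_nonneg (j := j) (by simp at hj; omega)]) j

/-- First passage below level `-c`: `M` is the part of `w` before it. -/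
theorem exists_eq_append_neg_one_cons {w : List ℤ} (hw : ∀ s ∈ w, -1 ≤ s) {c : ℤ}
    (hc : 0 ≤ c) (hsum : w.sum < -c) :
    ∃ M w', w = M ++ -1 :: w' ∧ (∀ j, -c ≤ (M.take j).sum) ∧ M.sum = -c := by
  induction w generalizing c with
  | nil => simp at hsum; omega
  | cons a t ih =>
    by_cases hfirst : c = 0 ∧ a = -1
    · exact ⟨[], t, by simp [hfirst.2], by simp [hfirst.1], by simp [hfirst.1]⟩
    have ha := hw a List.mem_cons_self
    obtain ⟨M, w', rfl, hM, hMsum⟩ :=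
      ih (fun s hs => hw s (List.mem_cons_of_mem a hs)) (c := c + a) (by omega)
        (by simp at hsum; omega)
    refine ⟨a :: M, w', rfl, fun j => ?_, by simp [hMsum]⟩
    cases j with
    | zero => simpa using hc
    | succ j => have := hM j; simp; omega

theorem exists_isLukas_decomposition (n : ℕ) {w : List ℤ} (hw : ∀ s ∈ w, -1 ≤ s)
    (hpre : ∀ j, -(n : ℤ) ≤ (w.take j).sum) (hsum : w.sum = -n) :
    ∃ (Ls : List (List ℤ)) (L₀ : List ℤ), Ls.length = n ∧ (∀ M ∈ Ls, IsLukas M) ∧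
      IsLukas L₀ ∧ w = (Ls.map (· ++ [-1])).flatten ++ L₀ := by
  induction n generalizing w with
  | zero =>
    exact ⟨[], w, rfl, by simp, ⟨hw, by simpa using hpre, by simpa using hsum⟩, rfl⟩
  | succ n ih =>
    obtain ⟨M, w', rfl, hM, hMsum⟩ := exists_eq_append_neg_one_cons hw le_rfl (by omega)
    have hw' : ∀ s ∈ w', -1 ≤ s := fun s hs => hw s (by simp [hs])
    have hpre' : ∀ j, -(n : ℤ) ≤ (w'.take j).sum := fun j => by
      have := hpre (M.length + (j + 1))
      rw [List.sum_take_append, List.take_of_length_le (by omega), Nat.add_sub_cancel_left,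
        List.take_succ_cons, List.sum_cons, hMsum] at this
      push_cast at this
      omega
    obtain ⟨Ls, L₀, hlen, hLs, hL₀, rfl⟩ :=
      ih hw' hpre' (by simp [hMsum] at hsum; omega)
    refine ⟨M :: Ls, L₀, by simp [hlen], List.forall_mem_cons.2 ⟨?_, hLs⟩, hL₀, by simp⟩
    exact ⟨fun s hs => hw s (by simp [hs]), by simpa using hM, by simpa using hMsum⟩

theorem IsLukas.eq_nil_or_flat_or_up {L : List ℤ} (hL : IsLukas L) :
    L = [] ∨ (∃ L', IsLukas L' ∧ L = 0 :: L') ∨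
      ∃ (Ls : List (List ℤ)) (L₀ : List ℤ), Ls ≠ [] ∧ (∀ M ∈ Ls, IsLukas M) ∧
        IsLukas L₀ ∧ L = (Ls.length : ℤ) :: ((Ls.map (· ++ [-1])).flatten ++ L₀) := by
  obtain ⟨hsteps, hpre, hsum⟩ := hL
  cases L with
  | nil => exact .inl rfl
  | cons k w =>
    have hk : 0 ≤ k := by simpa using hpre 1
    obtain ⟨Ls, L₀, hlen, hLs, hL₀, rfl⟩ := exists_isLukas_decomposition k.toNat
      (fun s hs => hsteps s (List.mem_cons_of_mem k hs))
      (fun j => by have := hpre (j + 1); simp at this; omega)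
      (by simp at hsum; omega)
    obtain rfl : k = Ls.length := by omega
    rcases eq_or_ne Ls [] with rfl | hne
    · exact .inr (.inl ⟨L₀, hL₀, by simp⟩)
    · exact .inr (.inr ⟨Ls, L₀, hne, hLs, hL₀, rfl⟩)

structure MatchesFlatsAndUps (L P : List ℤ) : Prop where
  length_eq : P.length = L.length
  isExcursion : IsExcursion P
  groundFlat_iff : ∀ j, GroundFlat L j ↔ GroundFlat P j
  countP_eq_count : (L.countP fun s => 1 ≤ s) = P.count 1

namespace MatchesFlatsAndUps

theorem nil : MatchesFlatsAndUps [] [] :=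
  ⟨rfl, isExcursion_nil, fun _ => Iff.rfl, rfl⟩

theorem flat_cons {L P : List ℤ} (h : MatchesFlatsAndUps L P) :
    MatchesFlatsAndUps (0 :: L) (0 :: P) := by
  have hgf : ∀ {w : List ℤ} {j : ℕ}, GroundFlat (0 :: w) (j + 1) ↔ GroundFlat w j := by
    simp [GroundFlat]
  refine ⟨by simp [h.length_eq], isExcursion_zero.append h.isExcursion, fun j => ?_,
    by simp [h.countP_eq_count]⟩
  cases j with
  | zero => simp [GroundFlat]
  | succ j => rw [hgf, hgf, h.groundFlat_iff]

theorem up {Ls : List (List ℤ)} (hne : Ls ≠ []) (hLs : ∀ M ∈ Ls, IsExcursion M)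
    {f : List ℤ → List ℤ} (hf : ∀ M ∈ Ls, MatchesFlatsAndUps M (f M)) {L₀ P : List ℤ}
    (h₀ : MatchesFlatsAndUps L₀ P) :
    MatchesFlatsAndUps ((Ls.length : ℤ) :: ((Ls.map (· ++ [-1])).flatten ++ L₀))
      (1 :: ([0].intercalate (Ls.map f) ++ -1 :: P)) := by
  have hBA : ([0].intercalate (Ls.map f)).length + 1 = (Ls.map (· ++ [-1])).flatten.length := by
    have h := List.length_intercalate_add [(0 : ℤ)] (l := Ls.map f) (by simpa using hne)
    rw [List.length_singleton, List.map_map] at h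
    rw [h, List.length_flatten_map_append_singleton]
    exact congrArg List.sum (List.map_congr_left fun M hM => by simp [(hf M hM).length_eq])
  set A := (Ls.map (· ++ [-1])).flatten
  set B := [0].intercalate (Ls.map f)
  have hB : IsExcursion B := isExcursion_zero.intercalate
    (by simpa using fun M hM => (hf M hM).isExcursion)
  have hlen : ((Ls.length : ℤ) :: A).length = (1 :: (B ++ [-1])).length := by simp; omega
  rw [← List.cons_append, show 1 :: (B ++ -1 :: P) = (1 :: (B ++ [-1])) ++ P by simp]
  refine ⟨by simp only [List.length_append, hlen, h₀.length_eq],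
    hB.one_cons_append_neg_one.append h₀.isExcursion, fun j => ?_, ?_⟩
  · rw [groundFlat_append_iff (sum_length_cons_flatten_map_append_neg_one hLs)
        (not_groundFlat_length_cons_flatten_map_append_neg_one hne hLs),
      groundFlat_append_iff hB.one_cons_append_neg_one.2 hB.not_groundFlat_one_cons_append_neg_one,
      hlen, h₀.groundFlat_iff]
  · have hcount : (Ls.map fun M => M.countP fun s => 1 ≤ s) = (Ls.map f).map (List.count 1) :=
      (List.map_map ..).symm ▸ List.map_congr_left fun M hM => (hf M hM).countP_eq_count
    simp only [List.countP_cons, List.countP_append, A, hcount,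
      List.countP_flatten_map_append_singleton (p := fun s => 1 ≤ s) (a := -1) (by decide),
      List.count_cons, List.count_append, B, List.count_intercalate (by simp : (1 : ℤ) ∉ [0]),
      h₀.countP_eq_count]
    simp [Nat.one_le_iff_ne_zero, hne]

end MatchesFlatsAndUps

theorem matchesFlatsAndUps_psi {ψ : List ℤ → List ℤ} (hψ : PsiEquations ψ) (L : List ℤ)
    (hL : IsLukas L) : MatchesFlatsAndUps L (ψ L) := by
  rcases hL.eq_nil_or_flat_or_up with
    rfl | ⟨L', hL', rfl⟩ | ⟨Ls, L₀, hne, hLs, hL₀, rfl⟩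
  · rw [hψ.1]
    exact .nil
  · rw [hψ.2.1 L' hL']
    exact (matchesFlatsAndUps_psi hψ L' hL').flat_cons
  · rw [hψ.2.2 Ls L₀ hne hLs hL₀]
    exact .up hne (fun M hM => (hLs M hM).2)
      (fun M hM => matchesFlatsAndUps_psi hψ M (hLs M hM)) (matchesFlatsAndUps_psi hψ L₀ hL₀)
termination_by L.length
decreasing_by
  all_goals subst_vars; simp only [List.length_cons, List.length_append]
  · omega
  · have := List.le_sum_of_mem (List.mem_map_of_mem (f := fun M : List ℤ => M.length + 1) hM)
    rw [List.length_flatten_map_append_singleton]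
    omega
  · omega

theorem psi_flats_and_ups (ψ : List ℤ → List ℤ) (hψ : PsiEquations ψ)
    (L : List ℤ) (hL : IsLukas L) :
    (∀ j : ℕ, (L[j]? = some 0 ∧ (L.take j).sum = 0) ↔
      ((ψ L)[j]? = some 0 ∧ ((ψ L).take j).sum = 0)) ∧
    (L.countP fun s => 1 ≤ s) = (ψ L).count 1 :=
  have h := matchesFlatsAndUps_psi hψ L hL
  ⟨h.groundFlat_iff, h.countP_eq_count⟩
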